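/- In a J-category in which all objects are cofibrant models, if p : E → B and p' : E' → B' are weakly equivalent morphisms, then Gsecat(p) = Gsecat(p'). -/

import Mathlib

open CategoryTheory CategoryTheory.Limits ZeroObject

universe v u v' u'

variable (C : Type u) [Category.{v} C] [HasZeroObject C] [HasZeroMorphisms C]

/-- A category satisfying axioms (J1)-(J4) of Doeraene's J-categories:
a pointed category with fibrations, cofibrations and weak equivalences. -/
structure PreJCat where
  fib : MorphismProperty C
  cofib : MorphismProperty C
  weq : MorphismProperty C
  /-- (J1) isomorphisms are trivial cofibrations -/
  iso_triv_cofib : ∀ {X Y : C} (f : X ⟶ Y), IsIso f → cofib f ∧ weq f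
  /-- (J1) isomorphisms are trivial fibrations -/
  iso_triv_fib : ∀ {X Y : C} (f : X ⟶ Y), IsIso f → fib f ∧ weq f
  fib_comp : ∀ {X Y Z : C} {f : X ⟶ Y} {g : Y ⟶ Z}, fib f → fib g → fib (f ≫ g)
  cofib_comp : ∀ {X Y Z : C} {f : X ⟶ Y} {g : Y ⟶ Z}, cofib f → cofib g → cofib (f ≫ g)
  /-- (J1) two-out-of-three for weak equivalences -/
  weq_comp : ∀ {X Y Z : C} {f : X ⟶ Y} {g : Y ⟶ Z}, weq f → weq g → weq (f ≫ g)
  weq_of_comp_left : ∀ {X Y Z : C} {f : X ⟶ Y} {g : Y ⟶ Z}, weq g → weq (f ≫ g) → weq f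
  weq_of_comp_right : ∀ {X Y Z : C} {f : X ⟶ Y} {g : Y ⟶ Z}, weq f → weq (f ≫ g) → weq g
  /-- (J2) pullbacks of fibrations exist, and the base extension is a fibration -/
  pb_exists : ∀ {E B B' : C} (p : E ⟶ B) (f : B' ⟶ B), fib p →
    ∃ (P : C) (fb : P ⟶ E) (pb : P ⟶ B'), IsPullback fb pb p f ∧ fib pb
  /-- (J2) base extensions of weak equivalences along fibrations are weak equivalences -/
  pb_weq : ∀ {E B B' P : C} {p : E ⟶ B} {f : B' ⟶ B} {fb : P ⟶ E} {pb : P ⟶ B'},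
    fib p → IsPullback fb pb p f → (weq f → weq fb) ∧ (weq p → weq pb)
  /-- (J2) dual: pushouts of cofibrations exist -/
  po_exists : ∀ {A X Y : C} (i : A ⟶ X) (g : A ⟶ Y), cofib i →
    ∃ (Q : C) (inl : X ⟶ Q) (inr : Y ⟶ Q), IsPushout i g inl inr ∧ cofib inr
  po_weq : ∀ {A X Y Q : C} {i : A ⟶ X} {g : A ⟶ Y} {inl : X ⟶ Q} {inr : Y ⟶ Q},
    cofib i → IsPushout i g inl inr → (weq g → weq inl) ∧ (weq i → weq inr)
  /-- (J3) F-factorizations exist -/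
  F_fac : ∀ {X Y : C} (f : X ⟶ Y), ∃ (Z : C) (τ : X ⟶ Z) (q : Z ⟶ Y),
    weq τ ∧ fib q ∧ τ ≫ q = f
  /-- (J3) C-factorizations exist -/
  C_fac : ∀ {X Y : C} (f : X ⟶ Y), ∃ (Z : C) (i : X ⟶ Z) (σ : Z ⟶ Y),
    cofib i ∧ weq σ ∧ i ≫ σ = f
  /-- (J4) cofibrant replacements exist -/
  cof_replace : ∀ X : C, ∃ (Xb : C) (q : Xb ⟶ X), fib q ∧ weq q ∧
    (∀ {E : C} (p : E ⟶ Xb), fib p → weq p → ∃ s : Xb ⟶ E, s ≫ p = 𝟙 Xb)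

variable {C}

namespace PreJCat

/-- An object is a cofibrant model if every trivial fibration onto it admits a section. -/
def CofModel (P : PreJCat C) (X : C) : Prop :=
  ∀ {E : C} (p : E ⟶ X), P.fib p → P.weq p → ∃ s : X ⟶ E, s ≫ p = 𝟙 X

/-- An object is e-fibrant if the morphism to the zero object is a fibration. -/
def EFibrant (P : PreJCat C) (X : C) : Prop := P.fib (0 : X ⟶ 0)

/-- `f` admits a weak lifting along `g` (all objects being cofibrant models). -/
def WeakLifting (P : PreJCat C) {A B Cc : C} (f : A ⟶ B) (g : Cc ⟶ B) : Prop :=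
  ∃ (E : C) (τ : Cc ⟶ E) (q : E ⟶ B), P.weq τ ∧ P.fib q ∧ τ ≫ q = g ∧
    ∃ s : A ⟶ E, s ≫ q = f

/-- `g` admits a weak section. -/
def HasWeakSection (P : PreJCat C) {E B : C} (g : E ⟶ B) : Prop :=
  P.WeakLifting (𝟙 B) g

/-- `j : J ⟶ B` is a join morphism of `f : A ⟶ B` and `g : Cc ⟶ B`: built from an
F-factorization of `g`, a pullback, a C-factorization and a pushout. -/
def IsJoin (P : PreJCat C) {A Cc B J : C} (f : A ⟶ B) (g : Cc ⟶ B) (j : J ⟶ B) : Prop :=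
  ∃ (E : C) (τ : Cc ⟶ E) (q : E ⟶ B), P.weq τ ∧ P.fib q ∧ τ ≫ q = g ∧
  ∃ (E' Z : C) (fbar : E' ⟶ E) (pbar : E' ⟶ A) (i : E' ⟶ Z) (σ : Z ⟶ E)
    (a : A ⟶ J) (bz : Z ⟶ J),
    IsPullback fbar pbar q f ∧ P.cofib i ∧ P.weq σ ∧ i ≫ σ = fbar ∧
    IsPushout pbar i a bz ∧ a ≫ j = f ∧ bz ≫ j = σ ≫ q

/-- `IsIterJoin P p n h` : `h` is an `n`-th iterated join morphism `*ⁿ_B E ⟶ B` of `p`. -/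
inductive IsIterJoin (P : PreJCat C) {E B : C} (p : E ⟶ B) : ℕ → ∀ {X : C}, (X ⟶ B) → Prop
  | zero : IsIterJoin P p 0 p
  | succ {n : ℕ} {X Y : C} {h : X ⟶ B} {h' : Y ⟶ B} :
      IsIterJoin P p n h → P.IsJoin h p h' → IsIterJoin P p (n + 1) h'

/-- The Ganea-type sectional category of a morphism. -/
noncomputable def Gsecat (P : PreJCat C) {E B : C} (p : E ⟶ B) : ℕ∞ :=
  sInf {n : ℕ∞ | ∃ m : ℕ, n = (m : ℕ∞) ∧
    ∃ (X : C) (h : X ⟶ B), P.IsIterJoin p m h ∧ P.HasWeakSection h}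

end PreJCat

/-- `p1, p2` exhibit `Pd` as a binary product of `X` and `Y`. -/
def IsBinProd {X Y Pd : C} (p1 : Pd ⟶ X) (p2 : Pd ⟶ Y) : Prop :=
  Nonempty (IsLimit (BinaryFan.mk p1 p2))

namespace PreJCat

/-- `IsFatWedge P p n j Δ` : `j : Tⁿ(p) ⟶ B^{n+1}` is an `n`-th fat wedge morphism of `p`
together with the diagonal `Δ : B ⟶ B^{n+1}`. -/
inductive IsFatWedge (P : PreJCat C) {E B : C} (p : E ⟶ B) :
    ℕ → ∀ {T Pw : C}, (T ⟶ Pw) → (B ⟶ Pw) → Prop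
  | zero : IsFatWedge P p 0 p (𝟙 B)
  | succ {n : ℕ} {T Pn : C} {j : T ⟶ Pn} {Δ : B ⟶ Pn}
      (hprev : IsFatWedge P p n j Δ)
      {Pn1 : C} {pr1 : Pn1 ⟶ Pn} {pr2 : Pn1 ⟶ B} (hP : IsBinProd pr1 pr2)
      {TB : C} {q1 : TB ⟶ T} {q2 : TB ⟶ B} (hTB : IsBinProd q1 q2)
      {PE : C} {r1 : PE ⟶ Pn} {r2 : PE ⟶ E} (hPE : IsBinProd r1 r2)
      {jB : TB ⟶ Pn1} (hjB : jB ≫ pr1 = q1 ≫ j ∧ jB ≫ pr2 = q2)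
      {pP : PE ⟶ Pn1} (hpP : pP ≫ pr1 = r1 ∧ pP ≫ pr2 = r2 ≫ p)
      {Tn1 : C} {j' : Tn1 ⟶ Pn1} (hjoin : P.IsJoin jB pP j')
      {Δ' : B ⟶ Pn1} (hΔ : Δ' ≫ pr1 = Δ ∧ Δ' ≫ pr2 = 𝟙 B) :
      IsFatWedge P p (n + 1) j' Δ'

/-- The Whitehead-type sectional category of a morphism with e-fibrant codomain. -/
noncomputable def WsecatE (P : PreJCat C) {E B : C} (p : E ⟶ B) : ℕ∞ :=
  sInf {n : ℕ∞ | ∃ m : ℕ, n = (m : ℕ∞) ∧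
    ∃ (T Pw : C) (j : T ⟶ Pw) (Δ : B ⟶ Pw), P.IsFatWedge p m j Δ ∧ P.WeakLifting Δ j}

/-- The Whitehead-type sectional category of an arbitrary morphism, via e-fibrant
replacements of the codomain. -/
noncomputable def Wsecat (P : PreJCat C) {E B : C} (p : E ⟶ B) : ℕ∞ :=
  ⨅ (F : C) (τ : B ⟶ F) (_ : P.weq τ ∧ P.EFibrant F), P.WsecatE (p ≫ τ)

/-- A commutative square is a homotopy pullback. -/
def IsHPB (P : PreJCat C) {D A Cc B : C} (f' : D ⟶ Cc) (g' : D ⟶ A)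
    (g : Cc ⟶ B) (f : A ⟶ B) : Prop :=
  f' ≫ g = g' ≫ f ∧ ∃ (E : C) (τ : Cc ⟶ E) (q : E ⟶ B), P.weq τ ∧ P.fib q ∧ τ ≫ q = g ∧
    ∃ (Pt : C) (pr1 : Pt ⟶ E) (pr2 : Pt ⟶ A), IsPullback pr1 pr2 q f ∧
      ∃ w : D ⟶ Pt, P.weq w ∧ w ≫ pr1 = f' ≫ τ ∧ w ≫ pr2 = g'

/-- A commutative square is a homotopy pushout. -/
def IsHPO (P : PreJCat C) {A B Cc D : C} (f : A ⟶ B) (g : A ⟶ Cc)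
    (i' : B ⟶ D) (j' : Cc ⟶ D) : Prop :=
  f ≫ i' = g ≫ j' ∧ ∃ (Z : C) (i : A ⟶ Z) (σ : Z ⟶ B), P.cofib i ∧ P.weq σ ∧ i ≫ σ = f ∧
    ∃ (Q : C) (inl : Z ⟶ Q) (inr : Cc ⟶ Q), IsPushout i g inl inr ∧
      ∃ w : Q ⟶ D, P.weq w ∧ inl ≫ w = σ ≫ i' ∧ inr ≫ w = j'

/-- `A-A'-B'-B` is a weak pullback over `b : B ⟶ B'` (all objects cofibrant models). -/
def IsWeakPullback (P : PreJCat C) {A B A' B' : C}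
    (f : A ⟶ B) (f' : A' ⟶ B') (b : B ⟶ B') : Prop :=
  ∃ (X : C) (τ : A' ⟶ X) (q : X ⟶ B'), P.weq τ ∧ P.fib q ∧ τ ≫ q = f' ∧
    ∃ x : A ⟶ X, P.IsHPB x f q b

/-- `g : G ⟶ B` is an `n`-th Ganea map of `B`: the `n`-th iterated join of `0 ⟶ B`. -/
def IsGaneaMap (P : PreJCat C) (B : C) (n : ℕ) {G : C} (g : G ⟶ B) : Prop :=
  P.IsIterJoin (0 : (0 : C) ⟶ B) n g

/-- The Lusternik-Schnirelmann category of an object. -/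
noncomputable def catObj (P : PreJCat C) (B : C) : ℕ∞ :=
  sInf {n : ℕ∞ | ∃ m : ℕ, n = (m : ℕ∞) ∧
    ∃ (G : C) (g : G ⟶ B), P.IsGaneaMap B m g ∧ P.HasWeakSection g}

/-- The Lusternik-Schnirelmann category of a morphism `b : B ⟶ B'`:
least `n` such that `b` admits a weak lifting along the `n`-th Ganea map of `B'`. -/
noncomputable def catMor (P : PreJCat C) {B B' : C} (b : B ⟶ B') : ℕ∞ :=
  sInf {n : ℕ∞ | ∃ m : ℕ, n = (m : ℕ∞) ∧
    ∃ (G : C) (g : G ⟶ B'), P.IsGaneaMap B' m g ∧ P.WeakLifting b g}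

/-- One step of a zigzag: a weak equivalence of morphisms in the arrow category. -/
def MorWeqStep (P : PreJCat C) (u v : Arrow C) : Prop :=
  ∃ h : u ⟶ v, P.weq h.left ∧ P.weq h.right

/-- Two morphisms are weakly equivalent: joined by a finite zigzag of weak
equivalences of morphisms. -/
def WeaklyEquivMor (P : PreJCat C) (u v : Arrow C) : Prop :=
  Relation.EqvGen P.MorWeqStep u v

def ObjWeqStep (P : PreJCat C) (X Y : C) : Prop := ∃ f : X ⟶ Y, P.weq f

/-- Two objects are weakly equivalent: joined by a finite zigzag of weak equivalences. -/
def WeaklyEquivObj (P : PreJCat C) (X Y : C) : Prop :=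
  Relation.EqvGen P.ObjWeqStep X Y

/-- The abstract topological complexity of an e-fibrant object:
the sectional category of the diagonal `B ⟶ B × B`. -/
noncomputable def TCE (P : PreJCat C) (B : C) : ℕ∞ :=
  ⨅ (Pd : C) (p1 : Pd ⟶ B) (p2 : Pd ⟶ B) (_ : IsBinProd p1 p2)
    (Δ : B ⟶ Pd) (_ : Δ ≫ p1 = 𝟙 B ∧ Δ ≫ p2 = 𝟙 B), P.Gsecat Δ

/-- The abstract topological complexity of an arbitrary object, via e-fibrant
replacements. -/
noncomputable def TC (P : PreJCat C) (B : C) : ℕ∞ :=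
  ⨅ (F : C) (τ : B ⟶ F) (_ : P.weq τ ∧ P.EFibrant F), P.TCE F

end PreJCat

variable (C)

/-- A J-category: (J1)-(J4) together with the cube axiom (J5). -/
structure JCat extends PreJCat C where
  /-- (J5) the cube axiom: in a commutative cube whose bottom face is a homotopy
  pushout and whose vertical faces are homotopy pullbacks, the top face is a
  homotopy pushout. -/
  cube : ∀ {X00 X01 X10 X11 Y00 Y01 Y10 Y11 : C}
    {tf : X00 ⟶ X01} {tg : X00 ⟶ X10} {ti : X01 ⟶ X11} {tj : X10 ⟶ X11}
    {bf : Y00 ⟶ Y01} {bg : Y00 ⟶ Y10} {bi : Y01 ⟶ Y11} {bj : Y10 ⟶ Y11}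
    {v00 : X00 ⟶ Y00} {v01 : X01 ⟶ Y01} {v10 : X10 ⟶ Y10} {v11 : X11 ⟶ Y11},
    tf ≫ ti = tg ≫ tj →
    toPreJCat.IsHPO bf bg bi bj →
    toPreJCat.IsHPB tf v00 v01 bf →
    toPreJCat.IsHPB tg v00 v10 bg →
    toPreJCat.IsHPB ti v01 v11 bi →
    toPreJCat.IsHPB tj v10 v11 bj →
    toPreJCat.IsHPO tf tg ti tj

variable {C}

/-- A modelization functor: preserves weak equivalences, homotopy pullbacks and
homotopy pushouts. -/
structure ModelizationFunctor {D : Type u'} [Category.{v'} D] [HasZeroObject D]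
    [HasZeroMorphisms D] (P : PreJCat C) (Q : PreJCat D) where
  F : C ⥤ D
  map_weq : ∀ {X Y : C} (f : X ⟶ Y), P.weq f → Q.weq (F.map f)
  map_hpb : ∀ {Dd A Cc B : C} {f' : Dd ⟶ Cc} {g' : Dd ⟶ A} {g : Cc ⟶ B} {f : A ⟶ B},
    P.IsHPB f' g' g f → Q.IsHPB (F.map f') (F.map g') (F.map g) (F.map f)
  map_hpo : ∀ {A B Cc Dd : C} {f : A ⟶ B} {g : A ⟶ Cc} {i' : B ⟶ Dd} {j' : Cc ⟶ Dd},
    P.IsHPO f g i' j' → Q.IsHPO (F.map f) (F.map g) (F.map i') (F.map j')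

/-!
Weak sections are invariant under weak equivalences of morphisms: pulling back an
F-factorization along a weak-equivalence square gives one of the source, and in the other
direction a section can be transported because every object is a cofibrant model.

The Ganea construction is homotopy invariant as well. If two cospans `(h, p)` and `(h', p')`
are linked by a zigzag of objectwise weak equivalences, then any join of `h, p` and any join of
`h', p'` are again so linked. For a single step one compares the F-factorizations (using
cofibrant models), then the pullbacks (a Ken Brown type argument and (J2)), and finally the
pushouts, which (J2) controls once the two C-factorizations are replaced by a common refinement.
By induction the `n`-th iterated joins of `p` and `p'` are linked, so they admit weak sections
for the same `n`.
-/

structure Cospan (C : Type u) [Category.{v} C] where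
  {left : C}
  {right : C}
  {base : C}
  fst : left ⟶ base
  snd : right ⟶ base

namespace PreJCat

variable {C : Type u} [Category.{v} C] (P : PreJCat C)

lemma weq_id (X : C) : P.weq (𝟙 X) := (P.iso_triv_fib (𝟙 X) inferInstance).2

lemma weq_of_comp_eq_id {X Y : C} {f : X ⟶ Y} {g : Y ⟶ X} (hg : P.weq g) (hfg : f ≫ g = 𝟙 X) :
    P.weq f :=
  P.weq_of_comp_left hg (hfg ▸ P.weq_id X)

lemma cofib_of_isPushout {A X Y Q : C} {i : A ⟶ X} {g : A ⟶ Y} {inl : X ⟶ Q} {inr : Y ⟶ Q}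
    (hpo : IsPushout i g inl inr) (hi : P.cofib i) : P.cofib inr := by
  obtain ⟨Q₀, inl₀, inr₀, hpo₀, hinr₀⟩ := P.po_exists i g hi
  rw [← hpo₀.inr_isoIsPushout_hom _ _ hpo]
  exact P.cofib_comp hinr₀ (P.iso_triv_cofib _ inferInstance).1

lemma fib_of_isPullback {E B X Q : C} {p : E ⟶ B} {f : X ⟶ B} {fst : Q ⟶ E} {snd : Q ⟶ X}
    (hpb : IsPullback fst snd p f) (hp : P.fib p) : P.fib snd := by
  obtain ⟨Q₀, fst₀, snd₀, hpb₀, hsnd₀⟩ := P.pb_exists p f hp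
  rw [← hpb.isoIsPullback_hom_snd _ _ hpb₀]
  exact P.fib_comp (P.iso_triv_fib _ inferInstance).1 hsnd₀

lemma exists_section_of_weq_comp (hc : ∀ X : C, P.CofModel X) {X Z B : C} {q : Z ⟶ B}
    (hq : P.fib q) (v : X ⟶ Z) (hvq : P.weq (v ≫ q)) : ∃ s : B ⟶ Z, s ≫ q = 𝟙 B := by
  obtain ⟨M, τ, ρ, hτ, hρ, rfl⟩ := P.F_fac v
  obtain ⟨s, hs⟩ := hc B (ρ ≫ q) (P.fib_comp hρ hq)
    (P.weq_of_comp_right hτ (by rwa [← Category.assoc]))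
  exact ⟨s ≫ ρ, by rwa [Category.assoc]⟩

lemma weq_of_isPushout_of_comp_weq {A X X' Z J J' : C} {f : A ⟶ X} {i : A ⟶ Z}
    {a : X ⟶ J} {b : Z ⟶ J} (hpo : IsPushout f i a b) (hi : P.cofib i)
    {u : X ⟶ X'} (hu : P.weq u) {a' : X' ⟶ J'} {b' : Z ⟶ J'} (hpo' : IsPushout (f ≫ u) i a' b')
    {w : J ⟶ J'} (ha : a ≫ w = u ≫ a') (hb : b ≫ w = b') : P.weq w := by
  subst hb
  exact (P.po_weq (P.cofib_of_isPushout hpo.flip hi) (hpo'.of_left ha.symm hpo).flip).1 hu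

lemma weq_of_isPushout_of_comp_trivialCofib {A X Z Z' J J' : C} {f : A ⟶ X} {i : A ⟶ Z}
    {a : X ⟶ J} {b : Z ⟶ J} (hpo : IsPushout f i a b)
    {z : Z ⟶ Z'} (hz : P.cofib z) (hz' : P.weq z) {a' : X ⟶ J'} {b' : Z' ⟶ J'}
    (hpo' : IsPushout f (i ≫ z) a' b') {w : J ⟶ J'} (ha : a ≫ w = a') (hb : b ≫ w = z ≫ b') :
    P.weq w := by
  subst ha
  exact (P.po_weq hz (hpo'.flip.of_left hb.symm hpo.flip)).2 hz'

lemma weq_of_isPullback_of_comp_weq {E X X' B Y Y' : C} {q : E ⟶ B} (hq : P.fib q)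
    {h : X ⟶ B} {fst : Y ⟶ E} {snd : Y ⟶ X} (hpb : IsPullback fst snd q h)
    {u : X' ⟶ X} (hu : P.weq u) {fst' : Y' ⟶ E} {snd' : Y' ⟶ X'}
    (hpb' : IsPullback fst' snd' q (u ≫ h)) {e : Y' ⟶ Y} (hfst : e ≫ fst = fst')
    (hsnd : e ≫ snd = snd' ≫ u) : P.weq e := by
  subst hfst
  exact (P.pb_weq (P.fib_of_isPullback hpb hq) (hpb'.of_right hsnd hpb)).1 hu

lemma weq_of_isPullback_of_comp_trivialFib {E E' B X Y Y' : C} {q : E ⟶ B} {h : X ⟶ B}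
    {fst : Y ⟶ E} {snd : Y ⟶ X} (hpb : IsPullback fst snd q h)
    {t : E' ⟶ E} (ht : P.fib t) (ht' : P.weq t) {fst' : Y' ⟶ E'} {snd' : Y' ⟶ X}
    (hpb' : IsPullback fst' snd' (t ≫ q) h) {e : Y' ⟶ Y} (hfst : e ≫ fst = fst' ≫ t)
    (hsnd : e ≫ snd = snd') : P.weq e := by
  subst hsnd
  exact (P.pb_weq ht (hpb'.of_bot hfst.symm hpb)).2 ht'

lemma exists_weq_over_of_fFac (hc : ∀ X : C, P.CofModel X) {X B Z₁ Z₂ : C}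
    {τ₁ : X ⟶ Z₁} {q₁ : Z₁ ⟶ B} {τ₂ : X ⟶ Z₂} {q₂ : Z₂ ⟶ B}
    (hτ₁ : P.weq τ₁) (hτ₂ : P.weq τ₂) (hq₂ : P.fib q₂)
    (h : τ₁ ≫ q₁ = τ₂ ≫ q₂) : ∃ θ : Z₁ ⟶ Z₂, P.weq θ ∧ θ ≫ q₂ = q₁ := by
  obtain ⟨W, g₂, g₁, hW, hg₁⟩ := P.pb_exists q₂ q₁ hq₂
  obtain ⟨M, κ, ρ, hκ, hρ, hκρ⟩ := P.F_fac (hW.lift τ₂ τ₁ h.symm)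
  have hρg₁ : P.weq (ρ ≫ g₁) :=
    P.weq_of_comp_right hκ (by rwa [← Category.assoc, hκρ, hW.lift_snd])
  have hρg₂ : P.weq (ρ ≫ g₂) :=
    P.weq_of_comp_right hκ (by rwa [← Category.assoc, hκρ, hW.lift_fst])
  obtain ⟨s, hs⟩ := hc Z₁ (ρ ≫ g₁) (P.fib_comp hρ hg₁) hρg₁
  refine ⟨s ≫ ρ ≫ g₂, P.weq_comp (P.weq_of_comp_eq_id hρg₁ hs) hρg₂, ?_⟩
  simp [hW.w, reassoc_of% hs]

lemma exists_fFac_isPullback {X X' B B' Z' : C} {j : X ⟶ B} {j' : X' ⟶ B'} {u : X ⟶ X'}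
    {β : B ⟶ B'} (hu : P.weq u) (hβ : P.weq β) (hsq : u ≫ j' = j ≫ β)
    {τ' : X' ⟶ Z'} {q' : Z' ⟶ B'} (hτ' : P.weq τ') (hq' : P.fib q') (hfac' : τ' ≫ q' = j') :
    ∃ (Z : C) (τ : X ⟶ Z) (q : Z ⟶ B) (g : Z ⟶ Z'), P.weq τ ∧ P.fib q ∧ τ ≫ q = j ∧
      IsPullback g q q' β ∧ P.weq g := by
  obtain ⟨Z, g, q, hpb, hq⟩ := P.pb_exists q' β hq'
  have hg : P.weq g := (P.pb_weq hq' hpb).1 hβ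
  have hw : (u ≫ τ') ≫ q' = j ≫ β := by rw [Category.assoc, hfac', hsq]
  refine ⟨Z, hpb.lift (u ≫ τ') j hw, q, g, ?_, hq, hpb.lift_snd _ _ _, hpb, hg⟩
  exact P.weq_of_comp_left hg (by rw [hpb.lift_fst]; exact P.weq_comp hu hτ')

lemma exists_weq_over_of_weq_square (hc : ∀ X : C, P.CofModel X) {X X' B B' Z Z' : C}
    {j : X ⟶ B} {j' : X' ⟶ B'} {u : X ⟶ X'} {β : B ⟶ B'}
    (hu : P.weq u) (hβ : P.weq β) (hsq : u ≫ j' = j ≫ β)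
    {τ : X ⟶ Z} {q : Z ⟶ B} (hτ : P.weq τ) (hfac : τ ≫ q = j)
    {τ' : X' ⟶ Z'} {q' : Z' ⟶ B'} (hτ' : P.weq τ') (hq' : P.fib q') (hfac' : τ' ≫ q' = j') :
    ∃ g : Z ⟶ Z', P.weq g ∧ g ≫ q' = q ≫ β := by
  obtain ⟨Zb, τb, qb, g, hτb, hqb, hfacb, hpb, hg⟩ :=
    P.exists_fFac_isPullback hu hβ hsq hτ' hq' hfac'
  obtain ⟨θ, hθ, hθq⟩ := P.exists_weq_over_of_fFac hc hτ hτb hqb (hfac.trans hfacb.symm)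
  exact ⟨θ ≫ g, P.weq_comp hθ hg, by rw [Category.assoc, hpb.w, ← Category.assoc, hθq]⟩

lemma hasWeakSection_iff_of_weq_square (hc : ∀ X : C, P.CofModel X) {X X' B B' : C}
    {j : X ⟶ B} {j' : X' ⟶ B'} {u : X ⟶ X'} {β : B ⟶ B'}
    (hu : P.weq u) (hβ : P.weq β) (hsq : u ≫ j' = j ≫ β) :
    P.HasWeakSection j ↔ P.HasWeakSection j' := by
  constructor
  · rintro ⟨Z, τ, q, hτ, -, hfac, s, hs⟩
    obtain ⟨Z', τ', q', hτ', hq', hfac'⟩ := P.F_fac j'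
    obtain ⟨g, hg, hgq⟩ :=
      P.exists_weq_over_of_weq_square hc hu hβ hsq hτ hfac hτ' hq' hfac'
    obtain ⟨s', hs'⟩ := P.exists_section_of_weq_comp hc hq' (s ≫ g)
      (by rwa [Category.assoc, hgq, reassoc_of% hs])
    exact ⟨Z', τ', q', hτ', hq', hfac', s', hs'⟩
  · rintro ⟨Z', τ', q', hτ', hq', hfac', s', hs'⟩
    obtain ⟨Z, τ, q, g, hτ, hq, hfac, hpb, -⟩ := P.exists_fFac_isPullback hu hβ hsq hτ' hq' hfac'
    refine ⟨Z, τ, q, hτ, hq, hfac, hpb.lift (β ≫ s') (𝟙 B) ?_, hpb.lift_snd _ _ _⟩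
    rw [Category.assoc, hs', Category.comp_id, Category.id_comp]

lemma weq_of_isPullback_of_weq_over {Z₁ Z₂ B X E₁ E₂ : C} {q₁ : Z₁ ⟶ B} {q₂ : Z₂ ⟶ B}
    (hq₁ : P.fib q₁) (hq₂ : P.fib q₂) {θ : Z₁ ⟶ Z₂} (hθ : P.weq θ) (hθq : θ ≫ q₂ = q₁)
    {h : X ⟶ B} {f₁ : E₁ ⟶ Z₁} {p₁ : E₁ ⟶ X} {f₂ : E₂ ⟶ Z₂} {p₂ : E₂ ⟶ X}
    (hpb₁ : IsPullback f₁ p₁ q₁ h) (hpb₂ : IsPullback f₂ p₂ q₂ h) {e : E₁ ⟶ E₂}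
    (hf : e ≫ f₂ = f₁ ≫ θ) (hp : e ≫ p₂ = p₁) : P.weq e := by
  -- Factor `(θ, 𝟙)` through `Z₂ ×_B Z₁` as `κ ≫ ρ`: both projections of `ρ` are trivial
  -- fibrations, so their base changes are weak equivalences by (J2), and `e` is the base change
  -- of `κ` (a section of one of them) followed by the other.
  obtain ⟨W, g₂, g₁, hW, hg₁⟩ := P.pb_exists q₂ q₁ hq₂
  obtain ⟨M, κ, ρ, hκ, hρ, hκρ⟩ := P.F_fac (hW.lift θ (𝟙 Z₁) (by rw [hθq, Category.id_comp]))
  have hκt : κ ≫ ρ ≫ g₁ = 𝟙 Z₁ := by rw [← Category.assoc, hκρ, hW.lift_snd]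
  have hκr : κ ≫ ρ ≫ g₂ = θ := by rw [← Category.assoc, hκρ, hW.lift_fst]
  have ht : P.fib (ρ ≫ g₁) := P.fib_comp hρ hg₁
  have hr : P.fib (ρ ≫ g₂) := P.fib_comp hρ (P.fib_of_isPullback hW.flip hq₁)
  have hrq : (ρ ≫ g₂) ≫ q₂ = (ρ ≫ g₁) ≫ q₁ := by simp only [Category.assoc, hW.w]
  obtain ⟨EM, fM, pM, hpbM, -⟩ := P.pb_exists ((ρ ≫ g₁) ≫ q₁) h (P.fib_comp ht hq₁)
  have hpbM₂ : IsPullback fM pM ((ρ ≫ g₂) ≫ q₂) h := hrq ▸ hpbM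
  have heM₁ := P.weq_of_isPullback_of_comp_trivialFib hpb₁ ht
    (P.weq_of_comp_right hκ (hκt ▸ P.weq_id Z₁)) hpbM
    (hpb₁.lift_fst (fM ≫ ρ ≫ g₁) pM (by simpa using hpbM.w)) (hpb₁.lift_snd _ _ _)
  have heM₂ := P.weq_of_isPullback_of_comp_trivialFib hpb₂ hr
    (P.weq_of_comp_right hκ (hκr ▸ hθ)) hpbM₂
    (hpb₂.lift_fst (fM ≫ ρ ≫ g₂) pM (by simpa using hpbM₂.w)) (hpb₂.lift_snd _ _ _)
  set κX := hpbM.lift (f₁ ≫ κ) p₁ (by simp [reassoc_of% hκt, hpb₁.w])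
  have hκX : κX ≫ hpb₁.lift (fM ≫ ρ ≫ g₁) pM (by simpa using hpbM.w) = 𝟙 E₁ :=
    hpb₁.hom_ext (by simp [κX, hκt]) (by simp [κX])
  have he : e = κX ≫ hpb₂.lift (fM ≫ ρ ≫ g₂) pM (by simpa using hpbM₂.w) :=
    hpb₂.hom_ext (by simp [κX, hf, hκr]) (by simp [κX, hp])
  rw [he]
  exact P.weq_comp (P.weq_of_comp_eq_id heM₁ hκX) heM₂

lemma weq_of_isPullback_of_weq_square {Z Z' B B' X X' E E' : C} {q : Z ⟶ B} {q' : Z' ⟶ B'}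
    (hq : P.fib q) (hq' : P.fib q') {g : Z ⟶ Z'} {β : B ⟶ B'} (hg : P.weq g) (hβ : P.weq β)
    (hgq : g ≫ q' = q ≫ β) {h : X ⟶ B} {h' : X' ⟶ B'} {u : X ⟶ X'} (hu : P.weq u)
    (huh : u ≫ h' = h ≫ β) {f : E ⟶ Z} {p : E ⟶ X} {f' : E' ⟶ Z'} {p' : E' ⟶ X'}
    (hpb : IsPullback f p q h) (hpb' : IsPullback f' p' q' h') {e : E ⟶ E'}
    (hf : e ≫ f' = f ≫ g) (hp : e ≫ p' = p ≫ u) : P.weq e := by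
  -- `e` factors through `(Z' ×_{B'} B) ×_B X`: a comparison over `B`, then a base change of `u`
  obtain ⟨Zb, gb, qb, hpbβ, hqb⟩ := P.pb_exists q' β hq'
  have hθ : P.weq (hpbβ.lift g q hgq) :=
    P.weq_of_comp_left ((P.pb_weq hq' hpbβ).1 hβ) (by rwa [hpbβ.lift_fst])
  obtain ⟨Eb, fb, pb, hpbb, -⟩ := P.pb_exists qb h hqb
  have hpbb' : IsPullback (fb ≫ gb) pb q' (u ≫ h') := huh ▸ hpbb.paste_horiz hpbβ
  have he₁ := P.weq_of_isPullback_of_weq_over hq hqb hθ (hpbβ.lift_snd _ _ _) hpb hpbb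
    (hpbb.lift_fst (f ≫ hpbβ.lift g q hgq) p (by simp [hpb.w])) (hpbb.lift_snd _ _ _)
  have he₂ := P.weq_of_isPullback_of_comp_weq hq' hpb' hu hpbb'
    (hpb'.lift_fst (fb ≫ gb) (pb ≫ u) (by simpa using hpbb'.w)) (hpb'.lift_snd _ _ _)
  have he : e = hpbb.lift (f ≫ hpbβ.lift g q hgq) p (by simp [hpb.w]) ≫
      hpb'.lift (fb ≫ gb) (pb ≫ u) (by simpa using hpbb'.w) :=
    hpb'.hom_ext (by simp [hf]) (by simp [hp])
  exact he ▸ P.weq_comp he₁ he₂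

def CospanWeqStep (a b : Cospan C) : Prop :=
  ∃ (u : a.left ⟶ b.left) (v : a.right ⟶ b.right) (β : a.base ⟶ b.base),
    P.weq u ∧ P.weq v ∧ P.weq β ∧ u ≫ b.fst = a.fst ≫ β ∧ v ≫ b.snd = a.snd ≫ β

def WeaklyEquivCospan : Cospan C → Cospan C → Prop := Relation.EqvGen P.CospanWeqStep

lemma cospanWeqStep_refl (a : Cospan C) : P.CospanWeqStep a a :=
  ⟨𝟙 _, 𝟙 _, 𝟙 _, P.weq_id _, P.weq_id _, P.weq_id _, by simp, by simp⟩

namespace WeaklyEquivCospan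

variable {P}

lemma of_step {a b : Cospan C} (h : P.CospanWeqStep a b) : P.WeaklyEquivCospan a b :=
  Relation.EqvGen.rel _ _ h

lemma symm {a b : Cospan C} (h : P.WeaklyEquivCospan a b) : P.WeaklyEquivCospan b a :=
  Relation.EqvGen.symm _ _ h

lemma trans {a b c : Cospan C} (h : P.WeaklyEquivCospan a b) (h' : P.WeaklyEquivCospan b c) :
    P.WeaklyEquivCospan a c :=
  Relation.EqvGen.trans _ _ _ h h'

end WeaklyEquivCospan

lemma weaklyEquivCospan_of_weq_over {J₁ J₂ B Y : C} {j₁ : J₁ ⟶ B} {j₂ : J₂ ⟶ B}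
    {w : J₁ ⟶ J₂} (hw : P.weq w) (hwj : w ≫ j₂ = j₁) (p : Y ⟶ B) :
    P.WeaklyEquivCospan ⟨j₁, p⟩ ⟨j₂, p⟩ :=
  .of_step ⟨w, 𝟙 _, 𝟙 _, hw, P.weq_id _, P.weq_id _, by simp [hwj], by simp⟩

lemma weaklyEquivCospan_of_weaklyEquivMor {x y : Arrow C} (h : P.WeaklyEquivMor x y) :
    P.WeaklyEquivCospan ⟨x.hom, x.hom⟩ ⟨y.hom, y.hom⟩ := by
  induction h with
  | rel x y hxy =>
    obtain ⟨φ, hl, hr⟩ := hxy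
    exact .of_step ⟨φ.left, φ.left, φ.right, hl, hl, hr, φ.w, φ.w⟩
  | refl x => exact .refl _
  | symm _ _ _ ih => exact ih.symm
  | trans _ _ _ _ _ ih₁ ih₂ => exact ih₁.trans ih₂

lemma hasWeakSection_iff_of_weaklyEquivCospan (hc : ∀ X : C, P.CofModel X) {a b : Cospan C}
    (h : P.WeaklyEquivCospan a b) : P.HasWeakSection a.fst ↔ P.HasWeakSection b.fst := by
  induction h with
  | rel a b hab =>
    obtain ⟨u, -, β, hu, -, hβ, huh, -⟩ := hab
    exact P.hasWeakSection_iff_of_weq_square hc hu hβ huh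
  | refl a => exact .rfl
  | symm _ _ _ ih => exact ih.symm
  | trans _ _ _ _ _ ih₁ ih₂ => exact ih₁.trans ih₂

/-- The part of a join of `f` and `g` that follows the F-factorization `g = τ ≫ q`. -/
def IsJoinAlong {A Eg B J : C} (q : Eg ⟶ B) (f : A ⟶ B) (j : J ⟶ B) : Prop :=
  ∃ (E' Z : C) (fbar : E' ⟶ Eg) (pbar : E' ⟶ A) (i : E' ⟶ Z) (σ : Z ⟶ Eg)
    (a : A ⟶ J) (bz : Z ⟶ J),
    IsPullback fbar pbar q f ∧ P.cofib i ∧ P.weq σ ∧ i ≫ σ = fbar ∧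
    IsPushout pbar i a bz ∧ a ≫ j = f ∧ bz ≫ j = σ ≫ q

lemma exists_isJoin {A Y B : C} (f : A ⟶ B) (g : Y ⟶ B) :
    ∃ (J : C) (j : J ⟶ B), P.IsJoin f g j := by
  obtain ⟨E, τ, q, hτ, hq, hτq⟩ := P.F_fac g
  obtain ⟨E', fbar, pbar, hpb, -⟩ := P.pb_exists q f hq
  obtain ⟨Z, i, σ, hi, hσ, hiσ⟩ := P.C_fac fbar
  obtain ⟨J, bz, a, hpo, -⟩ := P.po_exists i pbar hi
  have hw : pbar ≫ f = i ≫ σ ≫ q := by rw [← Category.assoc, hiσ, hpb.w]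
  exact ⟨J, hpo.flip.desc f (σ ≫ q) hw, E, τ, q, hτ, hq, hτq, E', Z, fbar, pbar, i, σ, a, bz,
    hpb, hi, hσ, hiσ, hpo.flip, hpo.flip.inl_desc _ _ _, hpo.flip.inr_desc _ _ _⟩

lemma weaklyEquivCospan_of_isPushout_trivialCofib {E₀ A Z Z₃ B J J₃ Y : C} {pbar : E₀ ⟶ A}
    {i : E₀ ⟶ Z} {i₃ : E₀ ⟶ Z₃} {z : Z ⟶ Z₃} (hz : P.cofib z) (hz' : P.weq z)
    (hiz : i ≫ z = i₃) {a : A ⟶ J} {b : Z ⟶ J} (hpo : IsPushout pbar i a b)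
    {a₃ : A ⟶ J₃} {b₃ : Z₃ ⟶ J₃} (hpo₃ : IsPushout pbar i₃ a₃ b₃) {j : J ⟶ B} {j₃ : J₃ ⟶ B}
    (ha : a ≫ j = a₃ ≫ j₃) (hb : b ≫ j = z ≫ b₃ ≫ j₃) (p : Y ⟶ B) :
    P.WeaklyEquivCospan ⟨j, p⟩ ⟨j₃, p⟩ := by
  subst hiz
  have hw : pbar ≫ a₃ = i ≫ z ≫ b₃ := by rw [hpo₃.w, Category.assoc]
  refine P.weaklyEquivCospan_of_weq_over (w := hpo.desc a₃ (z ≫ b₃) hw) ?_ ?_ p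
  · exact P.weq_of_isPushout_of_comp_trivialCofib hpo hz hz' hpo₃ (hpo.inl_desc _ _ _)
      (hpo.inr_desc _ _ _)
  · exact hpo.hom_ext (by simp [ha]) (by simp [hb])

lemma weaklyEquivCospan_of_cFac {E₀ A Eg B Z₁ Z₂ J₁ J₂ Y : C} {pbar : E₀ ⟶ A}
    {fbar : E₀ ⟶ Eg} {q : Eg ⟶ B} {f : A ⟶ B} (hw : pbar ≫ f = fbar ≫ q)
    {i₁ : E₀ ⟶ Z₁} {σ₁ : Z₁ ⟶ Eg} (hi₁ : P.cofib i₁) (hσ₁ : P.weq σ₁) (hiσ₁ : i₁ ≫ σ₁ = fbar)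
    {i₂ : E₀ ⟶ Z₂} {σ₂ : Z₂ ⟶ Eg} (hi₂ : P.cofib i₂) (hσ₂ : P.weq σ₂) (hiσ₂ : i₂ ≫ σ₂ = fbar)
    {a₁ : A ⟶ J₁} {b₁ : Z₁ ⟶ J₁} (hpo₁ : IsPushout pbar i₁ a₁ b₁)
    {a₂ : A ⟶ J₂} {b₂ : Z₂ ⟶ J₂} (hpo₂ : IsPushout pbar i₂ a₂ b₂)
    {j₁ : J₁ ⟶ B} (ha₁ : a₁ ≫ j₁ = f) (hb₁ : b₁ ≫ j₁ = σ₁ ≫ q)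
    {j₂ : J₂ ⟶ B} (ha₂ : a₂ ≫ j₂ = f) (hb₂ : b₂ ≫ j₂ = σ₂ ≫ q) (p : Y ⟶ B) :
    P.WeaklyEquivCospan ⟨j₁, p⟩ ⟨j₂, p⟩ := by
  -- `i₁ ≫ l₁ ≫ k = i₂ ≫ l₂ ≫ k` refines both C-factorizations, and `l₁ ≫ k`, `l₂ ≫ k` are
  -- trivial cofibrations
  obtain ⟨V, l₁, l₂, hV, hl₂⟩ := P.po_exists i₁ i₂ hi₁
  obtain ⟨Z₃, k, σ₃, hk, hσ₃, hkσ₃⟩ := P.C_fac (hV.desc σ₁ σ₂ (hiσ₁.trans hiσ₂.symm))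
  have hz₁σ : (l₁ ≫ k) ≫ σ₃ = σ₁ := by rw [Category.assoc, hkσ₃, hV.inl_desc]
  have hz₂σ : (l₂ ≫ k) ≫ σ₃ = σ₂ := by rw [Category.assoc, hkσ₃, hV.inr_desc]
  have hiz : i₂ ≫ l₂ ≫ k = i₁ ≫ l₁ ≫ k := by rw [← Category.assoc, ← hV.w, Category.assoc]
  have hl₁ : P.cofib l₁ := P.cofib_of_isPushout hV.flip hi₂
  obtain ⟨J₃, b₃, a₃, hpo₃, -⟩ :=
    P.po_exists (i₁ ≫ l₁ ≫ k) pbar (P.cofib_comp hi₁ (P.cofib_comp hl₁ hk))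
  have hw₃ : pbar ≫ f = (i₁ ≫ l₁ ≫ k) ≫ σ₃ ≫ q := by
    rw [hw, ← hiσ₁, ← hz₁σ]; simp only [Category.assoc]
  set j₃ := hpo₃.flip.desc f (σ₃ ≫ q) hw₃
  have e₁ : P.WeaklyEquivCospan ⟨j₁, p⟩ ⟨j₃, p⟩ :=
    P.weaklyEquivCospan_of_isPushout_trivialCofib (P.cofib_comp hl₁ hk)
      (P.weq_of_comp_left hσ₃ (hz₁σ ▸ hσ₁)) rfl hpo₁ hpo₃.flip
      (by simp [j₃, ha₁]) (by simp [j₃, hb₁, ← hz₁σ]) p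
  have e₂ : P.WeaklyEquivCospan ⟨j₂, p⟩ ⟨j₃, p⟩ :=
    P.weaklyEquivCospan_of_isPushout_trivialCofib (P.cofib_comp hl₂ hk)
      (P.weq_of_comp_left hσ₃ (hz₂σ ▸ hσ₂)) hiz hpo₂ hpo₃.flip
      (by simp [j₃, ha₂]) (by simp [j₃, hb₂, ← hz₂σ]) p
  exact e₁.trans e₂.symm

lemma exists_cFac_of_isPushout {E₀ E₀' Z Eg Eg' : C} {i : E₀ ⟶ Z} {σ : Z ⟶ Eg}
    (hi : P.cofib i) (hσ : P.weq σ) {e : E₀ ⟶ E₀'} (he : P.weq e) {g : Eg ⟶ Eg'}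
    (hg : P.weq g) {fbar' : E₀' ⟶ Eg'} (hw : e ≫ fbar' = i ≫ σ ≫ g) :
    ∃ (Q : C) (zh : Z ⟶ Q) (io : E₀' ⟶ Q) (σo : Q ⟶ Eg'), IsPushout i e zh io ∧
      P.cofib io ∧ P.weq σo ∧ io ≫ σo = fbar' ∧ zh ≫ σo = σ ≫ g := by
  obtain ⟨Q, zh, io, hQ, hio⟩ := P.po_exists i e hi
  refine ⟨Q, zh, io, hQ.desc (σ ≫ g) fbar' hw.symm, hQ, hio, ?_, hQ.inr_desc _ _ _,
    hQ.inl_desc _ _ _⟩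
  exact P.weq_of_comp_right ((P.po_weq hi hQ).1 he) (by rw [hQ.inl_desc]; exact P.weq_comp hσ hg)

lemma weaklyEquivCospan_of_isJoinAlong {X X' B B' Y Y' Eg Eg' J J' : C} {h : X ⟶ B}
    {h' : X' ⟶ B'} {p : Y ⟶ B} {p' : Y' ⟶ B'} {q : Eg ⟶ B} {q' : Eg' ⟶ B'}
    (hq : P.fib q) (hq' : P.fib q') {u : X ⟶ X'} {v : Y ⟶ Y'} {β : B ⟶ B'} {g : Eg ⟶ Eg'}
    (hu : P.weq u) (hv : P.weq v) (hβ : P.weq β) (hg : P.weq g) (huh : u ≫ h' = h ≫ β)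
    (hvp : v ≫ p' = p ≫ β) (hgq : g ≫ q' = q ≫ β) {j : J ⟶ B} {j' : J' ⟶ B'}
    (hj : P.IsJoinAlong q h j) (hj' : P.IsJoinAlong q' h' j') :
    P.WeaklyEquivCospan ⟨j, p⟩ ⟨j', p'⟩ := by
  obtain ⟨E₀, Z, -, pbar, i, σ, a, b, hpb, hi, hσ, rfl, hpo, ha, hb⟩ := hj
  obtain ⟨E₀', Z', fbar', pbar', i', σ', a', b', hpb', hi', hσ', hiσ', hpo', ha', hb'⟩ := hj'
  have hwe : (i ≫ σ ≫ g) ≫ q' = (pbar ≫ u) ≫ h' := by simp [hgq, huh, reassoc_of% hpb.w]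
  set e := hpb'.lift (i ≫ σ ≫ g) (pbar ≫ u) hwe
  have he : P.weq e := P.weq_of_isPullback_of_weq_square hq hq' hg hβ hgq hu huh hpb hpb'
    (by simp [e]) (hpb'.lift_snd _ _ _)
  obtain ⟨Q, zh, io, σo, hQ, hio, hσo, hioσ, hzσ⟩ :=
    P.exists_cFac_of_isPushout hi hσ he hg (hpb'.lift_fst _ _ _)
  -- a join of `h'` and `p'` whose C-factorization is pushed forward from that of `j`
  obtain ⟨Jo, bo, ao, hpoo, -⟩ := P.po_exists io pbar' hio
  set jo := hpoo.flip.desc h' (σo ≫ q') (by rw [← Category.assoc, hioσ, hpb'.w])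
  have hpoX : IsPushout (pbar ≫ u) i ao (zh ≫ bo) := by
    simpa [e] using hQ.flip.paste_horiz hpoo.flip
  set w := hpo.desc (u ≫ ao) (zh ≫ bo) (by simpa using hpoX.w)
  have hw : P.weq w := P.weq_of_isPushout_of_comp_weq hpo hi hu hpoX (hpo.inl_desc _ _ _)
    (hpo.inr_desc _ _ _)
  have hwj : w ≫ jo = j ≫ β :=
    hpo.hom_ext (by simp [w, jo, huh, reassoc_of% ha])
      (by simp [w, jo, reassoc_of% hzσ, hgq, reassoc_of% hb])
  exact (WeaklyEquivCospan.of_step ⟨w, v, β, hw, hv, hβ, hwj, hvp⟩).trans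
    (P.weaklyEquivCospan_of_cFac hpb'.w.symm hio hσo hioσ hi' hσ' hiσ' hpoo.flip hpo'
      (hpoo.flip.inl_desc _ _ _) (hpoo.flip.inr_desc _ _ _) ha' hb' p')

lemma weaklyEquivCospan_of_isJoin_of_step (hc : ∀ X : C, P.CofModel X) {a b : Cospan C}
    (hab : P.CospanWeqStep a b) {J J' : C} {j : J ⟶ a.base} {j' : J' ⟶ b.base}
    (hj : P.IsJoin a.fst a.snd j) (hj' : P.IsJoin b.fst b.snd j') :
    P.WeaklyEquivCospan ⟨j, a.snd⟩ ⟨j', b.snd⟩ := by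
  obtain ⟨u, v, β, hu, hv, hβ, huh, hvp⟩ := hab
  obtain ⟨Eg, τ, q, hτ, hq, hτq, hjq⟩ := hj
  obtain ⟨Eg', τ', q', hτ', hq', hτq', hjq'⟩ := hj'
  obtain ⟨g, hg, hgq⟩ := P.exists_weq_over_of_weq_square hc hv hβ hvp hτ hτq hτ' hq' hτq'
  exact P.weaklyEquivCospan_of_isJoinAlong hq hq' hu hv hβ hg huh hvp hgq hjq hjq'

lemma weaklyEquivCospan_of_isJoin (hc : ∀ X : C, P.CofModel X) {a b : Cospan C}
    (hab : P.WeaklyEquivCospan a b) {J J' : C} {j : J ⟶ a.base} {j' : J' ⟶ b.base}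
    (hj : P.IsJoin a.fst a.snd j) (hj' : P.IsJoin b.fst b.snd j') :
    P.WeaklyEquivCospan ⟨j, a.snd⟩ ⟨j', b.snd⟩ := by
  induction hab generalizing J J' with
  | rel a b hab => exact P.weaklyEquivCospan_of_isJoin_of_step hc hab hj hj'
  | refl a => exact P.weaklyEquivCospan_of_isJoin_of_step hc (P.cospanWeqStep_refl a) hj hj'
  | symm a b _ ih => exact (ih hj' hj).symm
  | trans a b c _ _ ih₁ ih₂ =>
    obtain ⟨Jb, jb, hjb⟩ := P.exists_isJoin b.fst b.snd
    exact (ih₁ hj hjb).trans (ih₂ hjb hj')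

lemma exists_isIterJoin_weaklyEquivCospan (hc : ∀ X : C, P.CofModel X) {E B E' B' : C}
    {p : E ⟶ B} {p' : E' ⟶ B'} (hpp : P.WeaklyEquivCospan ⟨p, p⟩ ⟨p', p'⟩) {n : ℕ} {X' : C}
    {h' : X' ⟶ B'} (hh' : P.IsIterJoin p' n h') :
    ∃ (X : C) (h : X ⟶ B), P.IsIterJoin p n h ∧ P.WeaklyEquivCospan ⟨h, p⟩ ⟨h', p'⟩ := by
  induction hh' with
  | zero => exact ⟨E, p, .zero, hpp⟩
  | succ _ hj' ih =>
    obtain ⟨X, h, hh, hhh'⟩ := ih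
    obtain ⟨J, j, hj⟩ := P.exists_isJoin h p
    exact ⟨J, j, .succ hh hj, P.weaklyEquivCospan_of_isJoin hc hhh' hj hj'⟩

lemma Gsecat_le_of_weaklyEquivCospan (hc : ∀ X : C, P.CofModel X) {E B E' B' : C}
    {p : E ⟶ B} {p' : E' ⟶ B'} (hpp : P.WeaklyEquivCospan ⟨p, p⟩ ⟨p', p'⟩) :
    P.Gsecat p ≤ P.Gsecat p' := by
  refine sInf_le_sInf ?_
  rintro _ ⟨n, rfl, X', h', hh', hs'⟩
  obtain ⟨X, h, hh, hhh'⟩ := P.exists_isIterJoin_weaklyEquivCospan hc hpp hh'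
  exact ⟨n, rfl, X, h, hh, (P.hasWeakSection_iff_of_weaklyEquivCospan hc hhh').2 hs'⟩

end PreJCat

/-- In a J-category in which all objects are cofibrant models,
weakly equivalent morphisms have the same Ganea sectional category. -/
theorem Gsecat_eq_of_weaklyEquivMor (J : JCat C)
    (hc : ∀ X : C, J.toPreJCat.CofModel X)
    {E B E' B' : C} (p : E ⟶ B) (p' : E' ⟶ B')
    (h : J.toPreJCat.WeaklyEquivMor (Arrow.mk p) (Arrow.mk p')) :
    J.toPreJCat.Gsecat p = J.toPreJCat.Gsecat p' := by
  have hpp := J.toPreJCat.weaklyEquivCospan_of_weaklyEquivMor h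
  exact le_antisymm (J.toPreJCat.Gsecat_le_of_weaklyEquivCospan hc hpp)
    (J.toPreJCat.Gsecat_le_of_weaklyEquivCospan hc hpp.symm)
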